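/- arXiv:1307.0827 — 7 statements merged into one kernel-verified Lean document; each statement's English description precedes it below -/
import Mathlib

section
/- (Proposition 1.) Let n = 2 and ψ = (b₁ + b₂)/√2. For every p ∈ [0, 2/3] and every effect E on ℂ², the reliability satisfies R_ψ(E) ≤ 1 − p/2. In particular, for p ≠ 0 no experiment can determine with reliability 1 whether a collapse has occurred. -/
open scoped InnerProductSpace
open MeasureTheory Finset

noncomputable section

abbrev Vn (n : ℕ) : Type := EuclideanSpace ℂ (Fin n)

/-- The standard orthonormal basis vector `b_k` of `ℂ^n`. -/
def basisVec (n : ℕ) (k : Fin n) : Vn n := EuclideanSpace.single k 1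

/-- The rank-one operator `|w⟩⟨v|`, i.e. `x ↦ ⟪v, x⟫ • w`. -/
def rankOne {n : ℕ} (v w : Vn n) : Vn n →L[ℂ] Vn n :=
  (innerSL ℂ v).smulRight w

/-- The diagonal part `diag E = ∑ₖ ⟪bₖ, E bₖ⟫ |bₖ⟩⟨bₖ|` of an operator `E`
in the standard basis. -/
def diagOp {n : ℕ} (E : Vn n →L[ℂ] Vn n) : Vn n →L[ℂ] Vn n :=
  ∑ k : Fin n, ⟪basisVec n k, E (basisVec n k)⟫_ℂ • rankOne (basisVec n k) (basisVec n k)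

/-- An effect: an operator `E` with `0 ≤ E ≤ I`
(both `E` and `I - E` positive semidefinite). -/
def IsEffect {n : ℕ} (E : Vn n →L[ℂ] Vn n) : Prop :=
  E.IsPositive ∧ (1 - E).IsPositive

/-- The reliability `R_ψ(E) = p⟪ψ, (diag E)ψ⟫ + (1-p)⟪ψ, (I-E)ψ⟫` of the yes–no
experiment with effect `E` for detecting a collapse (of probability `p`) onto the
standard basis, given initial wave function `ψ`. -/
def reliability {n : ℕ} (p : ℝ) (E : Vn n →L[ℂ] Vn n) (ψ : Vn n) : ℝ :=
  p * (⟪ψ, diagOp E ψ⟫_ℂ).re + (1 - p) * (⟪ψ, (1 - E) ψ⟫_ℂ).re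

/-!
Write `x = re ⟪b₁ + b₂, E (b₁ + b₂)⟫` and `y = re ⟪b₁ - b₂, E (b₁ - b₂)⟫`. For
`ψ = (b₁ + b₂)/√2` the diagonal term is `(E₁₁ + E₂₂)/2 = (x + y)/4` by the parallelogram
identity, and `⟪ψ, (I - E) ψ⟫ = 1 - x/2`. Hence `1 - p/2 - R_ψ(E) = p (2 - y)/4 + (2 - 3p) x/4`,
and both terms are nonnegative for `p ≤ 2/3`: `0 ≤ x` because `E ≥ 0`, and
`y ≤ ‖b₁ - b₂‖² = 2` because `I - E ≥ 0`.
-/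

theorem inner_add_map_add_add_inner_sub_map_sub {𝕜 V : Type*} [RCLike 𝕜] [NormedAddCommGroup V]
    [InnerProductSpace 𝕜 V] (T : V →ₗ[𝕜] V) (u w : V) :
    ⟪u + w, T (u + w)⟫_𝕜 + ⟪u - w, T (u - w)⟫_𝕜 = 2 * (⟪u, T u⟫_𝕜 + ⟪w, T w⟫_𝕜) := by
  simp only [map_add, map_sub, inner_add_left, inner_add_right, inner_sub_left, inner_sub_right]
  ring

namespace IsEffect

variable {n : ℕ} {E : Vn n →L[ℂ] Vn n}

theorem re_inner_map_self_nonneg (hE : IsEffect E) (v : Vn n) : 0 ≤ (⟪v, E v⟫_ℂ).re :=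
  hE.1.re_inner_nonneg_right v

theorem re_inner_map_self_le_norm_sq (hE : IsEffect E) (v : Vn n) :
    (⟪v, E v⟫_ℂ).re ≤ ‖v‖ ^ 2 := by
  have h := hE.2.re_inner_nonneg_right v
  rw [sub_apply, one_apply_eq_self, inner_sub_right, map_sub, inner_self_eq_norm_sq] at h
  exact sub_nonneg.mp h

end IsEffect

theorem inner_diagOp_self {n : ℕ} (E : Vn n →L[ℂ] Vn n) (ψ : Vn n) :
    ⟪ψ, diagOp E ψ⟫_ℂ = ∑ k, ((‖ψ k‖ ^ 2 : ℝ) : ℂ) * ⟪basisVec n k, E (basisVec n k)⟫_ℂ := by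
  simp only [diagOp, rankOne, _root_.sum_apply, smul_apply, ContinuousLinearMap.smulRight_apply,
    innerSL_apply_apply, inner_sum, inner_smul_right, basisVec, EuclideanSpace.inner_single_left,
    EuclideanSpace.inner_single_right, map_one, one_mul]
  refine Finset.sum_congr rfl fun k _ => ?_
  rw [Complex.ofReal_pow, ← Complex.mul_conj', mul_comm (ψ k)]
  ring

theorem norm_basisVec_add_sq : ‖basisVec 2 0 + basisVec 2 1‖ ^ 2 = 2 := by
  simp [basisVec, EuclideanSpace.norm_sq_eq, Fin.sum_univ_two]; norm_num

theorem norm_basisVec_sub_sq : ‖basisVec 2 0 - basisVec 2 1‖ ^ 2 = 2 := by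
  simp [basisVec, EuclideanSpace.norm_sq_eq, Fin.sum_univ_two]; norm_num

def plusState : Vn 2 := ((Real.sqrt 2 : ℝ) : ℂ)⁻¹ • (basisVec 2 0 + basisVec 2 1)

theorem norm_plusState_apply_sq (k : Fin 2) : ‖plusState k‖ ^ 2 = 1 / 2 := by
  fin_cases k <;> simp [plusState, basisVec]

theorem inner_plusState_map_plusState (T : Vn 2 →L[ℂ] Vn 2) :
    ⟪plusState, T plusState⟫_ℂ =
      ⟪basisVec 2 0 + basisVec 2 1, T (basisVec 2 0 + basisVec 2 1)⟫_ℂ / 2 := by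
  have h : ((Real.sqrt 2 : ℝ) : ℂ)⁻¹ * ((Real.sqrt 2 : ℝ) : ℂ)⁻¹ = 1 / 2 := by
    rw [← mul_inv, ← Complex.ofReal_mul, Real.mul_self_sqrt zero_le_two]
    norm_num
  rw [plusState, map_smul, inner_smul_left, inner_smul_right, map_inv₀, Complex.conj_ofReal,
    ← mul_assoc, h]
  ring

theorem reliability_plusState (p : ℝ) (E : Vn 2 →L[ℂ] Vn 2) :
    reliability p E plusState =
      p / 4 * ((⟪basisVec 2 0 + basisVec 2 1, E (basisVec 2 0 + basisVec 2 1)⟫_ℂ).re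
        + (⟪basisVec 2 0 - basisVec 2 1, E (basisVec 2 0 - basisVec 2 1)⟫_ℂ).re)
      + (1 - p) * (1 - (⟪basisVec 2 0 + basisVec 2 1, E (basisVec 2 0 + basisVec 2 1)⟫_ℂ).re / 2) := by
  set u := basisVec 2 0 + basisVec 2 1
  set v := basisVec 2 0 - basisVec 2 1
  have hdiag : ⟪plusState, diagOp E plusState⟫_ℂ = (⟪u, E u⟫_ℂ + ⟪v, E v⟫_ℂ) / 4 := by
    have h := inner_add_map_add_add_inner_sub_map_sub (E : Vn 2 →ₗ[ℂ] Vn 2)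
      (basisVec 2 0) (basisVec 2 1)
    simp only [ContinuousLinearMap.coe_coe] at h
    rw [inner_diagOp_self, Fin.sum_univ_two, norm_plusState_apply_sq, norm_plusState_apply_sq, h]
    push_cast
    ring
  have hcompl : ⟪plusState, (1 - E) plusState⟫_ℂ = 1 - ⟪u, E u⟫_ℂ / 2 := by
    rw [inner_plusState_map_plusState, sub_apply, one_apply_eq_self, inner_sub_right,
      inner_self_eq_norm_sq_to_K, ← RCLike.ofReal_pow, norm_basisVec_add_sq]
    push_cast
    ring
  rw [reliability, hdiag, hcompl]
  simp only [Complex.div_ofNat_re, Complex.add_re, Complex.sub_re, Complex.one_re]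
  ring

/-- (Proposition 1.) For `n = 2`, `ψ = (b₁ + b₂)/√2`, every `p ∈ [0, 2/3]` and every
effect `E` on `ℂ²`, the reliability satisfies `R_ψ(E) ≤ 1 - p/2`: no experiment can
retrodict whether a collapse occurred with greater reliability than the quantum
measurement of `I - |ψ⟩⟨ψ|`. -/
theorem stmt_2 (p : ℝ) (hp : p ∈ Set.Icc (0 : ℝ) (2 / 3))
    (E : Vn 2 →L[ℂ] Vn 2) (hE : IsEffect E) :
    reliability p E (((Real.sqrt 2 : ℝ) : ℂ)⁻¹ • (basisVec 2 0 + basisVec 2 1))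
      ≤ 1 - p / 2 := by
  obtain ⟨hp0, hp23⟩ := hp
  change reliability p E plusState ≤ 1 - p / 2
  have hsum := hE.re_inner_map_self_nonneg (basisVec 2 0 + basisVec 2 1)
  have hdiff := hE.re_inner_map_self_le_norm_sq (basisVec 2 0 - basisVec 2 1)
  rw [norm_basisVec_sub_sq] at hdiff
  rw [reliability_plusState]
  linarith [mul_nonneg hp0 (sub_nonneg.2 hdiff), mul_nonneg (by linarith : 0 ≤ 2 - 3 * p) hsum]
end
end

section
/- For every n ≥ 1, every unit vector ψ ∈ ℂ^n, every p ∈ [0, n/(n+1)], and every effect E on ℂ^n, the reliability satisfies R_ψ(E) ≤ 1 − p/n. -/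
/-!
Write `F = 1 - E`, `aₖ = |ψₖ|²`, `eₖ = ⟪bₖ, F bₖ⟫` and `s = ⟪ψ, F ψ⟫`, so that
`⟪ψ, (diag E) ψ⟫ = 1 - ∑ aₖ eₖ`. Factoring `F = S* S`, we get
`√s = ‖∑ ψₖ S bₖ‖ ≤ ∑ |ψₖ| ‖S bₖ‖`, and Cauchy–Schwarz gives `s ≤ n ∑ aₖ eₖ`. Hence
`R_ψ(E) ≤ p (1 - s/n) + (1 - p) s`, which is nondecreasing in `s` when `p ≤ n/(n+1)`;
since `E ≥ 0` forces `s ≤ 1`, the bound at `s = 1` is `1 - p/n`.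
-/

open scoped InnerProductSpace
open MeasureTheory Finset

noncomputable section

theorem inner_one_sub_apply_self_of_norm_eq_one {𝕜 E : Type*} [RCLike 𝕜] [NormedAddCommGroup E]
    [InnerProductSpace 𝕜 E] (A : E →L[𝕜] E) {x : E} (hx : ‖x‖ = 1) :
    ⟪x, (1 - A) x⟫_𝕜 = 1 - ⟪x, A x⟫_𝕜 := by
  rw [sub_apply, one_apply_eq_self, inner_sub_right, inner_self_eq_norm_sq_to_K, hx]
  simp

namespace ContinuousLinearMap

variable {H : Type*} [NormedAddCommGroup H] [InnerProductSpace ℂ H] [CompleteSpace H]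

theorem IsPositive.exists_re_inner_eq_norm_sq {F : H →L[ℂ] H} (hF : F.IsPositive) :
    ∃ S : H →L[ℂ] H, ∀ x, (⟪x, F x⟫_ℂ).re = ‖S x‖ ^ 2 := by
  obtain ⟨S, rfl⟩ := CStarAlgebra.nonneg_iff_eq_star_mul_self.mp ((nonneg_iff_isPositive F).mpr hF)
  refine ⟨S, fun x => ?_⟩
  rw [mul_apply_eq_comp, star_eq_adjoint, adjoint_inner_right]
  exact inner_self_eq_norm_sq (𝕜 := ℂ) _

theorem IsPositive.re_inner_sum_smul_le {ι : Type*} [Fintype ι] {F : H →L[ℂ] H}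
    (hF : F.IsPositive) (c : ι → ℂ) (v : ι → H) :
    (⟪∑ i, c i • v i, F (∑ i, c i • v i)⟫_ℂ).re ≤
      Fintype.card ι * ∑ i, ‖c i‖ ^ 2 * (⟪v i, F (v i)⟫_ℂ).re := by
  obtain ⟨S, hS⟩ := hF.exists_re_inner_eq_norm_sq
  simp only [hS]
  simp only [map_sum, map_smul]
  calc ‖∑ i, c i • S (v i)‖ ^ 2 ≤ (∑ i, ‖c i‖ * ‖S (v i)‖) ^ 2 := by
        gcongr
        simpa only [norm_smul] using norm_sum_le univ fun i => c i • S (v i)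
    _ ≤ Fintype.card ι * ∑ i, (‖c i‖ * ‖S (v i)‖) ^ 2 := sq_sum_le_card_mul_sum_sq
    _ = Fintype.card ι * ∑ i, ‖c i‖ ^ 2 * ‖S (v i)‖ ^ 2 := by simp only [mul_pow]

end ContinuousLinearMap

theorem mul_one_sub_add_one_sub_mul_le {n p s t : ℝ} (hn : 0 ≤ n) (hp : 0 ≤ p)
    (hpn : p * (n + 1) ≤ n) (hs : s ≤ 1) (hst : s ≤ n * t) :
    p * (1 - t) + (1 - p) * s ≤ 1 - p / n := by
  rcases hn.eq_or_lt with rfl | hn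
  · obtain rfl : p = 0 := by linarith
    simpa using hs
  rw [le_sub_iff_add_le, div_eq_mul_inv]
  nlinarith [mul_inv_cancel₀ hn.ne', inv_pos.2 hn]

theorem inner_basisVec_left {n : ℕ} (k : Fin n) (v : Vn n) : ⟪basisVec n k, v⟫_ℂ = v k := by
  simp [basisVec, EuclideanSpace.inner_single_left]

theorem norm_basisVec {n : ℕ} (k : Fin n) : ‖basisVec n k‖ = 1 := by
  simp [basisVec]

theorem sum_smul_basisVec {n : ℕ} (v : Vn n) : ∑ k, v k • basisVec n k = v := by
  simpa [basisVec] using (EuclideanSpace.basisFun (Fin n) ℂ).sum_repr v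

theorem inner_diagOp {n : ℕ} (E : Vn n →L[ℂ] Vn n) (ψ : Vn n) :
    ⟪ψ, diagOp E ψ⟫_ℂ = ∑ k, (‖ψ k‖ ^ 2 : ℝ) * ⟪basisVec n k, E (basisVec n k)⟫_ℂ := by
  simp only [diagOp, rankOne, _root_.sum_apply, smul_apply,
    ContinuousLinearMap.smulRight_apply, innerSL_apply_apply, inner_sum, inner_smul_right,
    inner_basisVec_left]
  refine sum_congr rfl fun k _ => ?_
  rw [← inner_conj_symm, inner_basisVec_left, Complex.mul_conj', mul_comm]
  push_cast
  ring

theorem stmt_4_general (n : ℕ) (ψ : Vn n) (hψ : ‖ψ‖ = 1)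
    (p : ℝ) (hp : p ∈ Set.Icc (0 : ℝ) ((n : ℝ) / ((n : ℝ) + 1)))
    (E : Vn n →L[ℂ] Vn n) (hE : IsEffect E) :
    reliability p E ψ ≤ 1 - p / (n : ℝ) := by
  obtain ⟨hE, hF⟩ := hE
  set T := ∑ k, ‖ψ k‖ ^ 2 * (⟪basisVec n k, (1 - E) (basisVec n k)⟫_ℂ).re
  have hdiag : (⟪ψ, diagOp E ψ⟫_ℂ).re = 1 - T := by
    have hsum : ∑ k, ‖ψ k‖ ^ 2 = 1 := by rw [← EuclideanSpace.norm_sq_eq, hψ, one_pow]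
    simp only [T, inner_diagOp, Complex.re_sum, Complex.re_ofReal_mul,
      inner_one_sub_apply_self_of_norm_eq_one _ (norm_basisVec _), Complex.sub_re,
      Complex.one_re, mul_sub, mul_one, sum_sub_distrib, hsum, sub_sub_cancel]
  have hs : (⟪ψ, (1 - E) ψ⟫_ℂ).re ≤ 1 := by
    rw [inner_one_sub_apply_self_of_norm_eq_one _ hψ, Complex.sub_re, Complex.one_re]
    have hEψ := hE.re_inner_nonneg_right ψ
    rw [RCLike.re_to_complex] at hEψ
    linarith
  have hsT : (⟪ψ, (1 - E) ψ⟫_ℂ).re ≤ n * T := by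
    have h := hF.re_inner_sum_smul_le ψ (basisVec n)
    rwa [sum_smul_basisVec, Fintype.card_fin] at h
  have hpn : p * (n + 1) ≤ n := (le_div_iff₀ (by positivity)).1 hp.2
  rw [reliability, hdiag]
  exact mul_one_sub_add_one_sub_mul_le n.cast_nonneg hp.1 hpn hs hsT

/-- For every `n ≥ 1`, every unit vector `ψ ∈ ℂⁿ`, every `p ∈ [0, n/(n+1)]`, and
every effect `E` on `ℂⁿ`, the reliability satisfies `R_ψ(E) ≤ 1 - p/n`. -/
theorem stmt_4 (n : ℕ) (hn : 1 ≤ n) (ψ : Vn n) (hψ : ‖ψ‖ = 1)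
    (p : ℝ) (hp : p ∈ Set.Icc (0 : ℝ) ((n : ℝ) / ((n : ℝ) + 1)))
    (E : Vn n →L[ℂ] Vn n) (hE : IsEffect E) :
    reliability p E ψ ≤ 1 - p / (n : ℝ) :=
  stmt_4_general n ψ hψ p hp E hE
end
end

section
/- For every n ≥ 1, every unit vector ψ ∈ ℂ^n, every p ∈ [n/(n+1), 1], and every effect E on ℂ^n, the reliability satisfies R_ψ(E) ≤ p; that is, for p ≥ n/(n+1) no experiment is more reliable than blind guessing. -/
open scoped InnerProductSpace
open MeasureTheory Finset

noncomputable section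

/-!
Put `F = 1 - E ≥ 0`. Writing `F = S⋆S` and expanding `ψ = ∑ ψₖ bₖ`, the triangle inequality
and Cauchy–Schwarz give the pinching bound `⟪ψ, F ψ⟫ ≤ n ⟪ψ, (diag F) ψ⟫`. Since
`diag E = 1 - diag F`, with `d = ⟪ψ, (diag F) ψ⟫ ≥ 0` the reliability is at most
`p (1 - d) + (1 - p) n d`, which is `≤ p` exactly when `n (1 - p) ≤ p`, i.e. `p ≥ n / (n + 1)`.
-/

namespace ContinuousLinearMap

variable {ι E : Type*} [Fintype ι] [NormedAddCommGroup E] [InnerProductSpace ℂ E] [CompleteSpace E]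

theorem IsPositive.re_inner_le_card_mul_sum {T : E →L[ℂ] E} (hT : T.IsPositive)
    (b : OrthonormalBasis ι ℂ E) (x : E) :
    (⟪x, T x⟫_ℂ).re ≤ Fintype.card ι * ∑ i, (⟪b i, T (b i)⟫_ℂ).re * ‖⟪b i, x⟫_ℂ‖ ^ 2 := by
  obtain ⟨S, rfl⟩ :=
    CStarAlgebra.nonneg_iff_eq_star_mul_self.mp ((nonneg_iff_isPositive T).mpr hT)
  have hnorm (y : E) : (⟪y, (star S * S) y⟫_ℂ).re = ‖S y‖ ^ 2 := by
    rw [star_eq_adjoint, apply_norm_sq_eq_inner_adjoint_right]; rfl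
  have hexpand : ‖S x‖ ≤ ∑ i, ‖⟪b i, x⟫_ℂ‖ * ‖S (b i)‖ := by
    conv_lhs => rw [← b.sum_repr' x, map_sum]
    refine (norm_sum_le _ _).trans_eq (Finset.sum_congr rfl fun i _ => ?_)
    rw [map_smul, norm_smul]
  simp only [hnorm]
  calc ‖S x‖ ^ 2 ≤ (∑ i, ‖⟪b i, x⟫_ℂ‖ * ‖S (b i)‖) ^ 2 := pow_le_pow_left₀ (norm_nonneg _) hexpand 2
    _ ≤ Fintype.card ι * ∑ i, (‖⟪b i, x⟫_ℂ‖ * ‖S (b i)‖) ^ 2 := sq_sum_le_card_mul_sum_sq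
    _ = _ := by simp only [mul_pow, mul_comm]

end ContinuousLinearMap

theorem diagOp_one (n : ℕ) : diagOp (1 : Vn n →L[ℂ] Vn n) = 1 := by
  ext1 x
  simpa [diagOp, rankOne, basisVec, InnerProductSpace.rankOne_apply] using
    congrArg (fun T => T x) (EuclideanSpace.basisFun (Fin n) ℂ).sum_rankOne_eq_id

theorem diagOp_sub {n : ℕ} (E F : Vn n →L[ℂ] Vn n) : diagOp (E - F) = diagOp E - diagOp F := by
  ext1 x
  simp [diagOp, sub_smul, Finset.sum_sub_distrib]

theorem re_inner_diagOp_self {n : ℕ} (E : Vn n →L[ℂ] Vn n) (ψ : Vn n) :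
    (⟪ψ, diagOp E ψ⟫_ℂ).re = ∑ k, (⟪basisVec n k, E (basisVec n k)⟫_ℂ).re * ‖ψ k‖ ^ 2 := by
  have h : ⟪ψ, diagOp E ψ⟫_ℂ = ∑ k, ⟪basisVec n k, E (basisVec n k)⟫_ℂ * (‖ψ k‖ ^ 2 : ℝ) := by
    simp [diagOp, rankOne, basisVec, EuclideanSpace.inner_single_left,
      EuclideanSpace.inner_single_right, Complex.mul_conj, Complex.normSq_eq_norm_sq]
  simp only [h, Complex.re_sum, Complex.re_mul_ofReal]

theorem re_inner_diagOp_self_nonneg {n : ℕ} {F : Vn n →L[ℂ] Vn n} (hF : F.IsPositive)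
    (ψ : Vn n) : 0 ≤ (⟪ψ, diagOp F ψ⟫_ℂ).re := by
  rw [re_inner_diagOp_self]
  exact Finset.sum_nonneg fun k _ => mul_nonneg (hF.re_inner_nonneg_right _) (by positivity)

theorem re_inner_le_card_mul_re_inner_diagOp {n : ℕ} {F : Vn n →L[ℂ] Vn n}
    (hF : F.IsPositive) (ψ : Vn n) :
    (⟪ψ, F ψ⟫_ℂ).re ≤ n * (⟪ψ, diagOp F ψ⟫_ℂ).re := by
  simpa [re_inner_diagOp_self, basisVec, EuclideanSpace.inner_single_left] using
    hF.re_inner_le_card_mul_sum (EuclideanSpace.basisFun (Fin n) ℂ) ψ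

theorem stmt_6_general (n : ℕ) (ψ : Vn n) (hψ : ‖ψ‖ = 1)
    (p : ℝ) (hp : p ∈ Set.Icc ((n : ℝ) / ((n : ℝ) + 1)) 1)
    (E : Vn n →L[ℂ] Vn n) (hE : IsEffect E) :
    reliability p E ψ ≤ p := by
  obtain ⟨hp_ge, hp_le⟩ := hp
  have hdiagE : (⟪ψ, diagOp E ψ⟫_ℂ).re = 1 - (⟪ψ, diagOp (1 - E) ψ⟫_ℂ).re := by
    simp [diagOp_sub, diagOp_one, inner_self_eq_norm_sq_to_K, hψ]
  set d := (⟪ψ, diagOp (1 - E) ψ⟫_ℂ).re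
  have hd : 0 ≤ d := re_inner_diagOp_self_nonneg hE.2 ψ
  have hpinch : (⟪ψ, (1 - E) ψ⟫_ℂ).re ≤ n * d := re_inner_le_card_mul_re_inner_diagOp hE.2 ψ
  have hnp : n * (1 - p) ≤ p := by
    rw [div_le_iff₀ (by positivity)] at hp_ge
    linarith
  rw [reliability, hdiagE]
  linarith [mul_le_mul_of_nonneg_left hpinch (sub_nonneg.2 hp_le), mul_le_mul_of_nonneg_left hnp hd]

/-- For every `n ≥ 1`, every unit vector `ψ ∈ ℂⁿ`, every `p ∈ [n/(n+1), 1]`, and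
every effect `E` on `ℂⁿ`, the reliability satisfies `R_ψ(E) ≤ p`: for such `p` no
experiment is more reliable than blind guessing. -/
theorem stmt_6 (n : ℕ) (hn : 1 ≤ n) (ψ : Vn n) (hψ : ‖ψ‖ = 1)
    (p : ℝ) (hp : p ∈ Set.Icc ((n : ℝ) / ((n : ℝ) + 1)) 1)
    (E : Vn n →L[ℂ] Vn n) (hE : IsEffect E) :
    reliability p E ψ ≤ p :=
  stmt_6_general n ψ hψ p hp E hE
end
end

section
/- (Proposition 3.) For every n ≥ 1, every p ∈ [0,1], and every effect E on ℂ^n, the uniform-average reliability R_u(E) = (1/n)·tr(p·diag E + (1−p)(I−E)) satisfies R_u(E) ≤ max{p, 1−p}. Moreover, if p = 1/2 then R_u(E) = 1/2 for every effect E; that is, for a uniformly distributed initial wave function no experiment is more reliable than blind guessing. -/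
/-!
Taking the trace discards everything off the diagonal, so `tr (diag E) = tr E =: t` and
`n · R_u(E) = p t + (1 - p)(n - t)`. Since `0 ≤ E ≤ I`, `t` lies in `[0, n]`, and an affine
function of `t` on that interval is at most its larger endpoint value `n · max {p, 1 - p}`.
At `p = 1/2` the dependence on `t` cancels.
-/

open scoped InnerProductSpace
open MeasureTheory Finset

noncomputable section

lemma trace_rankOne {n : ℕ} (v w : Vn n) :
    LinearMap.trace ℂ (Vn n) (rankOne v w) = ⟪v, w⟫_ℂ :=
  LinearMap.trace_smulRight _ w

lemma inner_basisVec_self (n : ℕ) (k : Fin n) : ⟪basisVec n k, basisVec n k⟫_ℂ = 1 := by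
  simp [basisVec]

lemma trace_eq_sum_inner_basisVec {n : ℕ} (T : Vn n →L[ℂ] Vn n) :
    LinearMap.trace ℂ (Vn n) T = ∑ k, ⟪basisVec n k, T (basisVec n k)⟫_ℂ := by
  simp [LinearMap.trace_eq_sum_inner _ (EuclideanSpace.basisFun (Fin n) ℂ), basisVec]

lemma trace_diagOp {n : ℕ} (E : Vn n →L[ℂ] Vn n) :
    LinearMap.trace ℂ (Vn n) (diagOp E) = LinearMap.trace ℂ (Vn n) E := by
  simp only [diagOp, ContinuousLinearMap.toLinearMap_sum, ContinuousLinearMap.toLinearMap_smul,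
    map_sum, map_smul, trace_rankOne, inner_basisVec_self, smul_eq_mul, mul_one,
    trace_eq_sum_inner_basisVec E]

lemma trace_one_sub {n : ℕ} (E : Vn n →L[ℂ] Vn n) :
    LinearMap.trace ℂ (Vn n) ↑(1 - E) = n - LinearMap.trace ℂ (Vn n) E := by
  simp

open scoped ComplexOrder in
lemma IsEffect.re_trace_mem_Icc {n : ℕ} {E : Vn n →L[ℂ] Vn n} (hE : IsEffect E) :
    (LinearMap.trace ℂ (Vn n) E).re ∈ Set.Icc 0 (n : ℝ) := by
  have h₀ := (Complex.nonneg_iff.mp hE.1.toLinearMap.trace_nonneg).1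
  have h₁ := (Complex.nonneg_iff.mp hE.2.toLinearMap.trace_nonneg).1
  rw [trace_one_sub, Complex.sub_re, Complex.natCast_re, sub_nonneg] at h₁
  exact ⟨h₀, h₁⟩

lemma mul_add_one_sub_mul_sub_le_mul_max {p t c : ℝ} (ht : t ∈ Set.Icc 0 c) :
    p * t + (1 - p) * (c - t) ≤ c * max p (1 - p) :=
  calc p * t + (1 - p) * (c - t)
      ≤ max p (1 - p) * t + max p (1 - p) * (c - t) :=
        add_le_add (mul_le_mul_of_nonneg_right (le_max_left _ _) ht.1)
          (mul_le_mul_of_nonneg_right (le_max_right _ _) (sub_nonneg.mpr ht.2))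
    _ = c * max p (1 - p) := by ring

lemma re_trace_smul_diagOp_add_smul_one_sub {n : ℕ} (p : ℝ) (E : Vn n →L[ℂ] Vn n) :
    (LinearMap.trace ℂ (Vn n)
        ↑((p : ℂ) • diagOp E + ((1 - p : ℝ) : ℂ) • (1 - E))).re
      = p * (LinearMap.trace ℂ (Vn n) E).re
        + (1 - p) * (n - (LinearMap.trace ℂ (Vn n) E).re) := by
  simp only [ContinuousLinearMap.toLinearMap_add, ContinuousLinearMap.toLinearMap_smul, map_add,
    map_smul, trace_diagOp, trace_one_sub, smul_eq_mul, Complex.add_re, Complex.re_ofReal_mul,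
    Complex.sub_re, Complex.natCast_re]

theorem stmt_9_general (n : ℕ) (hn : 1 ≤ n) (p : ℝ)
    (E : Vn n →L[ℂ] Vn n) (hE : IsEffect E) :
    (1 / (n : ℝ)) *
        (LinearMap.trace ℂ (Vn n)
          ↑((p : ℂ) • diagOp E + ((1 - p : ℝ) : ℂ) • (1 - E))).re
      ≤ max p (1 - p)
    ∧ (p = 1 / 2 →
      (1 / (n : ℝ)) *
        (LinearMap.trace ℂ (Vn n)
          ↑((p : ℂ) • diagOp E + ((1 - p : ℝ) : ℂ) • (1 - E))).re = 1 / 2) := by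
  have hn₀ : (0 : ℝ) < n := by exact_mod_cast hn
  rw [re_trace_smul_diagOp_add_smul_one_sub, one_div_mul_eq_div]
  refine ⟨(div_le_iff₀' hn₀).mpr (mul_add_one_sub_mul_sub_le_mul_max hE.re_trace_mem_Icc), ?_⟩
  rintro rfl
  field_simp
  ring

/-- (Proposition 3.) For every `n ≥ 1`, `p ∈ [0,1]`, and effect `E` on `ℂⁿ`, the
uniform-average reliability `R_u(E) = (1/n)·tr(p·diag E + (1-p)(I-E))` satisfies
`R_u(E) ≤ max{p, 1-p}`; moreover if `p = 1/2` then `R_u(E) = 1/2`. That is, for a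
uniformly distributed initial wave function no experiment beats blind guessing. -/
theorem stmt_9 (n : ℕ) (hn : 1 ≤ n) (p : ℝ) (hp : p ∈ Set.Icc (0 : ℝ) 1)
    (E : Vn n →L[ℂ] Vn n) (hE : IsEffect E) :
    (1 / (n : ℝ)) *
        (LinearMap.trace ℂ (Vn n)
          ↑((p : ℂ) • diagOp E + ((1 - p : ℝ) : ℂ) • (1 - E))).re
      ≤ max p (1 - p)
    ∧ (p = 1 / 2 →
      (1 / (n : ℝ)) *
        (LinearMap.trace ℂ (Vn n)
          ↑((p : ℂ) • diagOp E + ((1 - p : ℝ) : ℂ) • (1 - E))).re = 1 / 2) :=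
  stmt_9_general n hn p E hE
end
end

section
/- (Helstrom, Proposition 5, maximal value.) Let A be a self-adjoint operator on a finite-dimensional complex Hilbert space H. Then the maximum of tr(E·A) over all operators E with 0 ≤ E ≤ I equals the sum of the positive eigenvalues of A counted with multiplicity, i.e., equals tr(A⁺) where A⁺ is the positive part of A; and this maximum is attained at E = P₊(A), the orthogonal projection onto the span of all eigenvectors of A with positive eigenvalues. -/
open Finset

/-!
With `A = ∑ λⱼ Pⱼ` we have `tr(E A) = ∑ λⱼ tr(E Pⱼ)`, and for `0 ≤ E ≤ 1` each
`tr(E Pⱼ) = tr(Pⱼ E Pⱼ)` lies between `0` and `tr Pⱼ`. Dropping the terms with `λⱼ ≤ 0` and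
raising `tr(E Pⱼ)` to `tr Pⱼ` in the others bounds `tr(E A)` by `∑_{λⱼ > 0} λⱼ tr Pⱼ`, and
`E = ∑_{λⱼ > 0} Pⱼ` is a projection attaining it.
-/

open scoped ComplexOrder

theorem IsStarProjection.sum {R ι : Type*} [NonUnitalSemiring R] [StarRing R] {P : ι → R}
    (hP : ∀ j, IsStarProjection (P j)) (hPorth : ∀ i j, i ≠ j → P i * P j = 0)
    (s : Finset ι) : IsStarProjection (∑ j ∈ s, P j) := by
  classical
  induction s using Finset.induction_on with
  | empty => simp [IsStarProjection.zero]
  | insert a s ha ih =>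
    rw [sum_insert ha]
    refine (hP a).add ih ?_
    rw [mul_sum]
    exact sum_eq_zero fun j hj => hPorth a j (ne_of_mem_of_not_mem hj ha).symm

theorem sum_mul_sum_smul_of_orthogonal {R K ι : Type*} [Semiring R] [CommSemiring K]
    [Algebra K R] [Fintype ι] {P : ι → R} (hPidem : ∀ j, IsIdempotentElem (P j))
    (hPorth : ∀ i j, i ≠ j → P i * P j = 0) (c : ι → K) (s : Finset ι) :
    (∑ i ∈ s, P i) * ∑ j, c j • P j = ∑ i ∈ s, c i • P i := by
  rw [sum_mul]
  refine sum_congr rfl fun i _ => ?_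
  have hoff : ∀ j ∈ univ, j ≠ i → P i * c j • P j = 0 := fun j _ hji => by
    rw [mul_smul_comm, hPorth i j hji.symm, smul_zero]
  rw [mul_sum, sum_eq_single_of_mem i (mem_univ i) hoff, mul_smul_comm, (hPidem i).eq]

theorem sum_smul_le_sum_pos_smul {ι M : Type*} [AddCommGroup M] [PartialOrder M]
    [IsOrderedAddMonoid M] [Module ℝ M] [PosSMulMono ℝ M] (s : Finset ι) (c : ι → ℝ)
    {t u : ι → M} (ht : ∀ j ∈ s, 0 ≤ t j) (htu : ∀ j ∈ s, t j ≤ u j) :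
    ∑ j ∈ s, c j • t j ≤ ∑ j ∈ s with 0 < c j, c j • u j := by
  rw [← sum_filter_add_sum_filter_not s (0 < c ·)]
  calc ∑ j ∈ s with 0 < c j, c j • t j + ∑ j ∈ s with ¬ 0 < c j, c j • t j
      ≤ ∑ j ∈ s with 0 < c j, c j • u j + 0 := by
        gcongr ?_ + ?_
        · refine sum_le_sum fun j hj => ?_
          obtain ⟨hjs, hcj⟩ := mem_filter.mp hj
          exact smul_le_smul_of_nonneg_left (htu j hjs) hcj.le
        · refine sum_nonpos fun j hj => ?_
          obtain ⟨hjs, hcj⟩ := mem_filter.mp hj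
          exact smul_nonpos_of_nonpos_of_nonneg (not_lt.mp hcj) (ht j hjs)
    _ = _ := add_zero _

section Trace

variable {H : Type*} [NormedAddCommGroup H] [InnerProductSpace ℂ H] [FiniteDimensional ℂ H]

theorem ContinuousLinearMap.trace_comp_nonneg_of_isStarProjection {E Q : H →L[ℂ] H}
    (hE : E.IsPositive) (hQ : IsStarProjection Q) :
    0 ≤ LinearMap.trace ℂ H ↑(E ∘L Q) := by
  have hQEQ : (Q ∘L E ∘L Q).IsPositive := by
    simpa [hQ.isSelfAdjoint.adjoint_eq] using hE.adjoint_conj Q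
  have hcyc : LinearMap.trace ℂ H ↑(E ∘L Q) = LinearMap.trace ℂ H ↑(Q ∘L E ∘L Q) := by
    conv_lhs => rw [← hQ.isIdempotentElem.eq, mul_def, ← comp_assoc, toLinearMap_comp,
      LinearMap.trace_comp_comm', ← toLinearMap_comp]
  rw [hcyc]
  exact ((isPositive_toLinearMap_iff _).mpr hQEQ).trace_nonneg

theorem ContinuousLinearMap.trace_comp_le_trace_of_isStarProjection {E Q : H →L[ℂ] H}
    (hE : (1 - E).IsPositive) (hQ : IsStarProjection Q) :
    LinearMap.trace ℂ H ↑(E ∘L Q) ≤ LinearMap.trace ℂ H ↑Q := by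
  have h := trace_comp_nonneg_of_isStarProjection hE hQ
  rwa [sub_comp, ← mul_def, one_mul, toLinearMap_sub, map_sub, sub_nonneg] at h

end Trace

theorem stmt_11_general
    {H : Type*} [NormedAddCommGroup H] [InnerProductSpace ℂ H] [FiniteDimensional ℂ H]
    (A : H →L[ℂ] H)
    (m : ℕ) (lam : Fin m → ℝ) (P : Fin m → H →L[ℂ] H)
    (hPsa : ∀ j, IsSelfAdjoint (P j))
    (hPidem : ∀ j, P j ∘L P j = P j)
    (hPorth : ∀ i j, i ≠ j → P i ∘L P j = 0)
    (hspec : A = ∑ j, (lam j : ℂ) • P j) :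
    IsGreatest
      {x : ℝ | ∃ E : H →L[ℂ] H, (E.IsPositive ∧ (1 - E).IsPositive) ∧
        x = (LinearMap.trace ℂ H ↑(E ∘L A)).re}
      ((LinearMap.trace ℂ H
        ↑(∑ j ∈ univ.filter (fun j => 0 < lam j), (lam j : ℂ) • P j)).re)
    ∧ (LinearMap.trace ℂ H
        ↑((∑ j ∈ univ.filter (fun j => 0 < lam j), P j) ∘L A)).re
      = (LinearMap.trace ℂ H
        ↑(∑ j ∈ univ.filter (fun j => 0 < lam j), (lam j : ℂ) • P j)).re := by
  have hP : ∀ j, IsStarProjection (P j) := fun j => ⟨hPidem j, hPsa j⟩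
  have hcomp : (∑ j ∈ univ.filter (0 < lam ·), P j) ∘L A
      = ∑ j ∈ univ.filter (0 < lam ·), (lam j : ℂ) • P j := by
    rw [hspec]
    exact sum_mul_sum_smul_of_orthogonal hPidem hPorth _ _
  have hQ := IsStarProjection.sum hP hPorth (univ.filter (0 < lam ·))
  refine ⟨⟨⟨_, ⟨.of_isStarProjection hQ, .of_isStarProjection hQ.one_sub⟩, by rw [hcomp]⟩, ?_⟩,
    by rw [hcomp]⟩
  rintro _ ⟨E, ⟨hE, hE1⟩, rfl⟩
  refine Complex.re_le_re ?_
  calc LinearMap.trace ℂ H ↑(E ∘L A)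
      = ∑ j, lam j • LinearMap.trace ℂ H ↑(E ∘L P j) := by
        simp [hspec, ContinuousLinearMap.comp_finsetSum, ContinuousLinearMap.comp_smul,
          Complex.real_smul]
    _ ≤ ∑ j with 0 < lam j, lam j • LinearMap.trace ℂ H ↑(P j) :=
        sum_smul_le_sum_pos_smul _ _
          (fun j _ => E.trace_comp_nonneg_of_isStarProjection hE (hP j))
          (fun j _ => E.trace_comp_le_trace_of_isStarProjection hE1 (hP j))
    _ = LinearMap.trace ℂ H ↑(∑ j with 0 < lam j, (lam j : ℂ) • P j) := by
        simp [Complex.real_smul]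

/-- (Helstrom; Proposition 5, maximal value.) Let `A` be a self-adjoint operator on a
finite-dimensional complex Hilbert space, with spectral decomposition
`A = ∑ⱼ λⱼ Pⱼ` (the `Pⱼ` mutually orthogonal projections summing to `I`). Then the set
of values `tr(E·A)` over all operators `0 ≤ E ≤ I` has greatest element
`tr(A⁺) = ∑_{j : λⱼ>0} λⱼ tr(Pⱼ)` (the sum of the positive eigenvalues of `A` with
multiplicity), and this maximum is attained at `E = P₊(A) = ∑_{j : λⱼ>0} Pⱼ`, the
projection onto the span of the eigenvectors with positive eigenvalues. -/
theorem stmt_11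
    {H : Type*} [NormedAddCommGroup H] [InnerProductSpace ℂ H] [FiniteDimensional ℂ H]
    (A : H →L[ℂ] H) (hA : IsSelfAdjoint A)
    (m : ℕ) (lam : Fin m → ℝ) (P : Fin m → H →L[ℂ] H)
    (hPsa : ∀ j, IsSelfAdjoint (P j))
    (hPidem : ∀ j, P j ∘L P j = P j)
    (hPorth : ∀ i j, i ≠ j → P i ∘L P j = 0)
    (hPsum : ∑ j, P j = 1)
    (hspec : A = ∑ j, (lam j : ℂ) • P j) :
    IsGreatest
      {x : ℝ | ∃ E : H →L[ℂ] H, (E.IsPositive ∧ (1 - E).IsPositive) ∧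
        x = (LinearMap.trace ℂ H ↑(E ∘L A)).re}
      ((LinearMap.trace ℂ H
        ↑(∑ j ∈ univ.filter (fun j => 0 < lam j), (lam j : ℂ) • P j)).re)
    ∧ (LinearMap.trace ℂ H
        ↑((∑ j ∈ univ.filter (fun j => 0 < lam j), P j) ∘L A)).re
      = (LinearMap.trace ℂ H
        ↑(∑ j ∈ univ.filter (fun j => 0 < lam j), (lam j : ℂ) • P j)).re :=
  stmt_11_general A m lam P hPsa hPidem hPorth hspec
end

section
/- (Helstrom, Proposition 5, characterization of optimizers.) Let A be a self-adjoint operator on a finite-dimensional complex Hilbert space H, and let E be an operator with 0 ≤ E ≤ I. Then tr(E·A) equals its maximal value tr(A⁺) if and only if P₊(A) ≤ E ≤ P₊(A) + P₀(A); equivalently, if and only if E v = v for every eigenvector v of A with positive eigenvalue and E v = 0 for every eigenvector v of A with negative eigenvalue. In particular, if 0 is not an eigenvalue of A, the optimizer E = P₊(A) is unique. -/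
open scoped InnerProductSpace ComplexOrder
open Finset

/-!
Write `A = ∑ⱼ λⱼ Pⱼ`. Then `tr(A⁺) - tr(E A)` is the sum of `λⱼ tr((1 - E) Pⱼ)` over `λⱼ > 0`
and of `-λⱼ tr(E Pⱼ)` over `λⱼ < 0`. Each of these traces is the trace of a positive operator
`Pⱼ T Pⱼ` with `T = 1 - E` or `T = E`, so the gap is nonnegative, and it vanishes exactly when
`(1 - E) Pⱼ = 0` for `λⱼ > 0` and `E Pⱼ = 0` for `λⱼ < 0`, because `c⋆ T c = 0` forces `T c = 0`
for `T ≥ 0` (write `T = √T √T`). Conjugating `E` by `1 - P₊` and `1 - E` by the negative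
spectral projection turns this condition into the operator inequalities; decomposing an
eigenvector along the `Pⱼ` turns it into the eigenvector conditions. If `A` is injective, the
`Pⱼ` with `λⱼ = 0` vanish and the condition forces `E = P₊(A)`.
-/

def IsHelstromOptimal {ι R : Type*} [MulZeroClass R] (lam : ι → ℝ) (P : ι → R) (E : R) :
    Prop :=
  ∀ j, (0 < lam j → E * P j = P j) ∧ (lam j < 0 → E * P j = 0)

theorem ite_pos_mul_sub_mul_nonneg {l t p : ℝ} (ht : 0 ≤ t) (htp : t ≤ p) :
    0 ≤ (if 0 < l then l * p else 0) - l * t := by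
  split_ifs with hl
  · nlinarith
  · nlinarith [not_lt.mp hl]

theorem ite_pos_mul_sub_mul_eq_zero_iff {l t p : ℝ} :
    (if 0 < l then l * p else 0) - l * t = 0 ↔ (0 < l → t = p) ∧ (l < 0 → t = 0) := by
  rcases lt_trichotomy l 0 with hl | rfl | hl
  · simp [hl, hl.not_gt, hl.ne]
  · simp
  · simp [hl, hl.ne', hl.not_gt, ← mul_sub, sub_eq_zero, eq_comm]

theorem sum_filter_pos_add_sum_filter_zero {ι M : Type*} [AddCommGroup M] (s : Finset ι)
    (lam : ι → ℝ) (f : ι → M) :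
    ∑ j ∈ s.filter (0 < lam ·), f j + ∑ j ∈ s.filter (lam · = 0), f j
      = ∑ j ∈ s, f j - ∑ j ∈ s.filter (lam · < 0), f j := by
  rw [eq_sub_iff_add_eq, sum_filter, sum_filter, sum_filter, ← sum_add_distrib,
    ← sum_add_distrib]
  refine sum_congr rfl fun j _ => ?_
  rcases lt_trichotomy (lam j) 0 with h | h | h
  · simp [h, h.not_gt, h.ne]
  · simp [h]
  · simp [h, h.ne', h.not_gt]

theorem IsHelstromOptimal.eq_sum_filter_pos {ι R : Type*} [Fintype ι] [Semiring R]
    {P : ι → R} {lam : ι → ℝ} {E : R} (hC : IsHelstromOptimal lam P E) (hP : ∑ j, P j = 1)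
    (h0 : ∀ j, lam j = 0 → P j = 0) : E = ∑ j ∈ univ.filter (0 < lam ·), P j := by
  rw [sum_filter]
  calc E = ∑ j, E * P j := by rw [← mul_sum, hP, mul_one]
    _ = _ := sum_congr rfl fun j _ => by
      rcases lt_trichotomy (lam j) 0 with h | h | h
      · rw [(hC j).2 h, if_neg h.not_gt]
      · rw [h0 j h, mul_zero, if_neg h.not_gt]
      · rw [(hC j).1 h, if_pos h]

namespace OrthogonalIdempotents

variable {R ι : Type*} [Semiring R] {P : ι → R}

theorem sum_mul_of_mem (hP : OrthogonalIdempotents P) {j : ι} {s : Finset ι} (h : j ∈ s) :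
    (∑ k ∈ s, P k) * P j = P j := by
  classical
  simp [Finset.sum_mul, hP.mul_eq, h]

theorem sum_smul_mul {𝕜 : Type*} [CommSemiring 𝕜] [Algebra 𝕜 R] [Fintype ι]
    (hP : OrthogonalIdempotents P) (c : ι → 𝕜) (j : ι) :
    (∑ k, c k • P k) * P j = c j • P j := by
  classical
  simp [Finset.sum_mul, hP.mul_eq]

theorem mul_sum_smul {𝕜 : Type*} [CommSemiring 𝕜] [Algebra 𝕜 R] [Fintype ι]
    (hP : OrthogonalIdempotents P) (c : ι → 𝕜) (j : ι) :
    P j * (∑ k, c k • P k) = c j • P j := by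
  classical
  simp [Finset.mul_sum, hP.mul_eq]

theorem isStarProjection_sum [StarRing R] (hP : OrthogonalIdempotents P)
    (hPsa : ∀ j, IsSelfAdjoint (P j)) (s : Finset ι) : IsStarProjection (∑ k ∈ s, P k) :=
  ⟨hP.isIdempotentElem_sum, isSelfAdjoint_sum s fun j _ => hPsa j⟩

end OrthogonalIdempotents

theorem IsStarProjection.le_of_mul_eq_self {R : Type*} [Ring R] [StarRing R] [PartialOrder R]
    [StarOrderedRing R] {e p : R} (hp : IsStarProjection p) (he : 0 ≤ e) (hep : e * p = p) :
    p ≤ e := by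
  have hpe : p * e = p := by
    simpa [hp.isSelfAdjoint.star_eq, (IsSelfAdjoint.of_nonneg he).star_eq] using congrArg star hep
  have hconj : star (1 - p) * e * (1 - p) = e - p := by
    rw [star_sub, star_one, hp.isSelfAdjoint.star_eq]
    simp only [sub_mul, mul_sub, one_mul, mul_one, hep, hpe, hp.isIdempotentElem.eq]
    abel
  exact sub_nonneg.mp (hconj ▸ star_left_conjugate_nonneg he _)

section CStarAlgebra

variable {𝒜 : Type*} [CStarAlgebra 𝒜] [PartialOrder 𝒜] [StarOrderedRing 𝒜]

theorem mul_eq_zero_of_star_mul_mul_eq_zero {a c : 𝒜} (ha : 0 ≤ a) (h : star c * a * c = 0) :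
    a * c = 0 := by
  have hs : IsSelfAdjoint (CFC.sqrt a) := (CFC.sqrt_nonneg a).isSelfAdjoint
  have hsc : CFC.sqrt a * c = 0 := by
    rw [← CStarRing.star_mul_self_eq_zero_iff, star_mul, hs.star_eq, ← h]
    conv_rhs => rw [← CFC.sqrt_mul_sqrt_self a]
    simp only [mul_assoc]
  rw [← CFC.sqrt_mul_sqrt_self a, mul_assoc, hsc, mul_zero]

theorem mul_eq_zero_of_le_of_mul_eq_zero {a b c : 𝒜} (ha : 0 ≤ a) (hab : a ≤ b)
    (hbc : b * c = 0) : a * c = 0 := by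
  refine mul_eq_zero_of_star_mul_mul_eq_zero ha (le_antisymm ?_ (star_left_conjugate_nonneg ha c))
  calc star c * a * c ≤ star c * b * c := star_left_conjugate_le_conjugate hab c
    _ = 0 := by rw [mul_assoc, hbc, mul_zero]

theorem isHelstromOptimal_iff_le_and_le {ι : Type*} [Fintype ι] {P : ι → 𝒜} {lam : ι → ℝ}
    {E : 𝒜} (hP : CompleteOrthogonalIdempotents P) (hPsa : ∀ j, IsSelfAdjoint (P j))
    (hE0 : 0 ≤ E) (hE1 : E ≤ 1) :
    IsHelstromOptimal lam P E ↔
      ∑ j ∈ univ.filter (0 < lam ·), P j ≤ E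
        ∧ E ≤ ∑ j ∈ univ.filter (0 < lam ·), P j + ∑ j ∈ univ.filter (lam · = 0), P j := by
  have hE1' : 0 ≤ 1 - E := sub_nonneg.mpr hE1
  rw [sum_filter_pos_add_sum_filter_zero, hP.complete]
  constructor
  · intro hC
    constructor
    · refine (hP.isStarProjection_sum hPsa _).le_of_mul_eq_self hE0 ?_
      rw [mul_sum]
      exact sum_congr rfl fun j hj => (hC j).1 (mem_filter.mp hj).2
    · have hER : E * ∑ j ∈ univ.filter (lam · < 0), P j = 0 := by
        rw [mul_sum]
        exact sum_eq_zero fun j hj => (hC j).2 (mem_filter.mp hj).2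
      refine le_sub_comm.mp ((hP.isStarProjection_sum hPsa _).le_of_mul_eq_self hE1' ?_)
      rw [sub_mul, one_mul, hER, sub_zero]
  · rintro ⟨hQE, hER⟩ j
    constructor
    · intro hj
      have h := mul_eq_zero_of_le_of_mul_eq_zero hE1' (sub_le_sub_left hQE 1) (c := P j)
        (by rw [sub_mul, one_mul, hP.sum_mul_of_mem (by simpa using hj), sub_self])
      rwa [sub_mul, one_mul, sub_eq_zero, eq_comm] at h
    · intro hj
      exact mul_eq_zero_of_le_of_mul_eq_zero hE0 hER (by
        rw [sub_mul, one_mul, hP.sum_mul_of_mem (by simpa using hj), sub_self])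

end CStarAlgebra

theorem LinearMap.IsPositive.trace_eq_zero_iff {𝕜 E : Type*} [RCLike 𝕜] [NormedAddCommGroup E]
    [InnerProductSpace 𝕜 E] [FiniteDimensional 𝕜 E] {T : E →ₗ[𝕜] E} (hT : T.IsPositive) :
    trace 𝕜 E T = 0 ↔ T = 0 := by
  let b := stdOrthonormalBasis 𝕜 E
  rw [trace_eq_matrix_trace 𝕜 b.toBasis, ((posSemidef_toMatrix_iff b).mpr hT).trace_eq_zero_iff,
    LinearEquiv.map_eq_zero_iff]

namespace ContinuousLinearMap

variable {H : Type*} [NormedAddCommGroup H] [InnerProductSpace ℂ H]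

theorem re_trace_sum_smul {ι : Type*} (s : Finset ι) (c : ι → ℝ) (T : ι → H →L[ℂ] H) :
    (LinearMap.trace ℂ H ↑(∑ j ∈ s, (c j : ℂ) • T j)).re
      = ∑ j ∈ s, c j * (LinearMap.trace ℂ H ↑(T j)).re := by
  simp [map_sum, Complex.re_sum]

theorem re_trace_sub_mul (E p : H →L[ℂ] H) :
    (LinearMap.trace ℂ H ↑((1 - E) * p)).re
      = (LinearMap.trace ℂ H ↑p).re - (LinearMap.trace ℂ H ↑(E * p)).re := by
  rw [sub_mul, one_mul, toLinearMap_sub, map_sub, Complex.sub_re]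

section Eigenvectors

variable {ι : Type*} [Fintype ι] {P : ι → H →L[ℂ] H} {lam : ι → ℝ} {A : H →L[ℂ] H}

theorem sum_proj_apply (hP : ∑ j, P j = 1) (v : H) : ∑ j, P j v = v := by
  rw [← _root_.sum_apply, hP, one_apply_eq_self]

theorem apply_proj_eq_smul (hP : OrthogonalIdempotents P) (hA : A = ∑ j, (lam j : ℂ) • P j)
    (j : ι) (v : H) : A (P j v) = (lam j : ℂ) • P j v := by
  rw [← mul_apply_eq_comp, hA, hP.sum_smul_mul, smul_apply]

theorem proj_apply_eq_zero_of_apply_eq_smul (hP : OrthogonalIdempotents P)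
    (hA : A = ∑ j, (lam j : ℂ) • P j) {c : ℝ} {v : H} (hv : A v = (c : ℂ) • v) {j : ι}
    (hj : lam j ≠ c) : P j v = 0 := by
  have hPA : P j * A = (lam j : ℂ) • P j := by rw [hA, hP.mul_sum_smul]
  have h : (lam j : ℂ) • P j v = (c : ℂ) • P j v := by
    rw [← smul_apply, ← hPA, mul_apply_eq_comp, hv, map_smul]
  rw [← sub_eq_zero, ← sub_smul, smul_eq_zero] at h
  exact h.resolve_left (sub_ne_zero.mpr (by exact_mod_cast hj))

theorem _root_.IsHelstromOptimal.apply_eq_of_apply_eq_smul {E : H →L[ℂ] H}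
    (hC : IsHelstromOptimal lam P E) (hP : CompleteOrthogonalIdempotents P)
    (hA : A = ∑ j, (lam j : ℂ) • P j) {c : ℝ} {v : H} (hv : A v = (c : ℂ) • v) :
    (0 < c → E v = v) ∧ (c < 0 → E v = 0) := by
  rw [← sum_proj_apply hP.complete v, map_sum]
  constructor
  · intro hc
    refine sum_congr rfl fun j _ => ?_
    by_cases hj : lam j = c
    · exact congr($((hC j).1 (hj ▸ hc)) v)
    · rw [proj_apply_eq_zero_of_apply_eq_smul hP.toOrthogonalIdempotents hA hv hj, map_zero]
  · intro hc
    refine sum_eq_zero fun j _ => ?_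
    by_cases hj : lam j = c
    · exact congr($((hC j).2 (hj ▸ hc)) v)
    · rw [proj_apply_eq_zero_of_apply_eq_smul hP.toOrthogonalIdempotents hA hv hj, map_zero]

theorem isHelstromOptimal_iff_eigenvectors {E : H →L[ℂ] H}
    (hP : CompleteOrthogonalIdempotents P) (hA : A = ∑ j, (lam j : ℂ) • P j) :
    IsHelstromOptimal lam P E ↔
      (∀ (c : ℝ) (v : H), 0 < c → v ≠ 0 → A v = (c : ℂ) • v → E v = v)
        ∧ (∀ (c : ℝ) (v : H), c < 0 → v ≠ 0 → A v = (c : ℂ) • v → E v = 0) := by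
  refine ⟨fun hC => ⟨fun c v hc _ hv => (IsHelstromOptimal.apply_eq_of_apply_eq_smul hC hP hA hv).1 hc,
    fun c v hc _ hv => (IsHelstromOptimal.apply_eq_of_apply_eq_smul hC hP hA hv).2 hc⟩,
    fun ⟨hpos, hneg⟩ j => ⟨fun hj => ?_, fun hj => ?_⟩⟩ <;> ext v <;>
    by_cases hv : P j v = 0
  · simp [hv]
  · exact hpos _ _ hj hv (apply_proj_eq_smul hP.toOrthogonalIdempotents hA j v)
  · simp [hv]
  · exact hneg _ _ hj hv (apply_proj_eq_smul hP.toOrthogonalIdempotents hA j v)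

end Eigenvectors

variable [FiniteDimensional ℂ H]

theorem trace_mul_eq_trace_star_mul_mul {T p : H →L[ℂ] H} (hp : IsStarProjection p) :
    LinearMap.trace ℂ H ↑(T * p) = LinearMap.trace ℂ H ↑(star p * T * p) := by
  rw [hp.isSelfAdjoint.star_eq, mul_assoc, toLinearMap_mul p, LinearMap.trace_mul_comm,
    ← toLinearMap_mul, mul_assoc, hp.isIdempotentElem.eq]

theorem trace_star_mul_mul_nonneg {T : H →L[ℂ] H} (hT : 0 ≤ T) (c : H →L[ℂ] H) :
    0 ≤ LinearMap.trace ℂ H ↑(star c * T * c) :=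
  ((isPositive_toLinearMap_iff _).mpr
    ((nonneg_iff_isPositive _).mp (star_left_conjugate_nonneg hT c))).trace_nonneg

theorem re_trace_mul_nonneg {T p : H →L[ℂ] H} (hT : 0 ≤ T) (hp : IsStarProjection p) :
    0 ≤ (LinearMap.trace ℂ H ↑(T * p)).re := by
  rw [trace_mul_eq_trace_star_mul_mul hp]
  exact (Complex.nonneg_iff.mp (trace_star_mul_mul_nonneg hT p)).1

theorem re_trace_mul_eq_zero_iff {T p : H →L[ℂ] H} (hT : 0 ≤ T) (hp : IsStarProjection p) :
    (LinearMap.trace ℂ H ↑(T * p)).re = 0 ↔ T * p = 0 := by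
  refine ⟨fun h => mul_eq_zero_of_star_mul_mul_eq_zero hT ?_, fun h => by simp [h]⟩
  have hpos := (isPositive_toLinearMap_iff _).mpr
    ((nonneg_iff_isPositive _).mp (star_left_conjugate_nonneg hT p))
  have him := (Complex.nonneg_iff.mp hpos.trace_nonneg).2
  rw [trace_mul_eq_trace_star_mul_mul hp] at h
  exact coe_injective (hpos.trace_eq_zero_iff.mp (Complex.ext h him.symm))

theorem re_trace_mul_eq_re_trace_iff {E p : H →L[ℂ] H} (hE1 : E ≤ 1) (hp : IsStarProjection p) :
    (LinearMap.trace ℂ H ↑(E * p)).re = (LinearMap.trace ℂ H ↑p).re ↔ E * p = p := by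
  have h := re_trace_mul_eq_zero_iff (sub_nonneg.mpr hE1) hp
  rwa [re_trace_sub_mul, sub_mul, one_mul, sub_eq_zero, sub_eq_zero, eq_comm,
    eq_comm (a := p)] at h

theorem re_trace_mul_eq_re_trace_posPart_iff {ι : Type*} [Fintype ι] {P : ι → H →L[ℂ] H}
    {lam : ι → ℝ} {E : H →L[ℂ] H} (hP : ∀ j, IsStarProjection (P j)) (hE0 : 0 ≤ E)
    (hE1 : E ≤ 1) :
    (LinearMap.trace ℂ H ↑(E * ∑ j, (lam j : ℂ) • P j)).re
        = (LinearMap.trace ℂ H ↑(∑ j ∈ univ.filter (0 < lam ·), (lam j : ℂ) • P j)).re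
      ↔ IsHelstromOptimal lam P E := by
  have ht j : 0 ≤ (LinearMap.trace ℂ H ↑(E * P j)).re := re_trace_mul_nonneg hE0 (hP j)
  have htp j : (LinearMap.trace ℂ H ↑(E * P j)).re ≤ (LinearMap.trace ℂ H ↑(P j)).re := by
    have h := re_trace_mul_nonneg (sub_nonneg.mpr hE1) (hP j)
    rw [re_trace_sub_mul] at h
    linarith
  simp_rw [mul_sum, mul_smul_comm, re_trace_sum_smul, sum_filter]
  rw [eq_comm, ← sub_eq_zero, ← sum_sub_distrib,
    sum_eq_zero_iff_of_nonneg fun j _ => ite_pos_mul_sub_mul_nonneg (ht j) (htp j)]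
  simp only [mem_univ, true_implies, ite_pos_mul_sub_mul_eq_zero_iff,
    re_trace_mul_eq_re_trace_iff hE1 (hP _), re_trace_mul_eq_zero_iff hE0 (hP _)]
  rfl

end ContinuousLinearMap

open ContinuousLinearMap

theorem stmt_12_general
    {H : Type*} [NormedAddCommGroup H] [InnerProductSpace ℂ H] [FiniteDimensional ℂ H]
    (A : H →L[ℂ] H)
    (m : ℕ) (lam : Fin m → ℝ) (P : Fin m → H →L[ℂ] H)
    (hPsa : ∀ j, IsSelfAdjoint (P j))
    (hPidem : ∀ j, P j ∘L P j = P j)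
    (hPorth : ∀ i j, i ≠ j → P i ∘L P j = 0)
    (hPsum : ∑ j, P j = 1)
    (hspec : A = ∑ j, (lam j : ℂ) • P j)
    (E : H →L[ℂ] H) (hE : E.IsPositive ∧ (1 - E).IsPositive) :
    ((LinearMap.trace ℂ H ↑(E ∘L A)).re
        = (LinearMap.trace ℂ H
            ↑(∑ j ∈ univ.filter (fun j => 0 < lam j), (lam j : ℂ) • P j)).re
      ↔ (E - ∑ j ∈ univ.filter (fun j => 0 < lam j), P j).IsPositive
        ∧ ((∑ j ∈ univ.filter (fun j => 0 < lam j), P j)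
            + (∑ j ∈ univ.filter (fun j => lam j = 0), P j) - E).IsPositive)
    ∧ ((LinearMap.trace ℂ H ↑(E ∘L A)).re
        = (LinearMap.trace ℂ H
            ↑(∑ j ∈ univ.filter (fun j => 0 < lam j), (lam j : ℂ) • P j)).re
      ↔ (∀ (c : ℝ) (v : H), 0 < c → v ≠ 0 → A v = (c : ℂ) • v → E v = v)
        ∧ (∀ (c : ℝ) (v : H), c < 0 → v ≠ 0 → A v = (c : ℂ) • v → E v = 0))
    ∧ ((∀ v : H, A v = 0 → v = 0) →
        ((LinearMap.trace ℂ H ↑(E ∘L A)).re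
          = (LinearMap.trace ℂ H
              ↑(∑ j ∈ univ.filter (fun j => 0 < lam j), (lam j : ℂ) • P j)).re
          → E = ∑ j ∈ univ.filter (fun j => 0 < lam j), P j)) := by
  have hP : CompleteOrthogonalIdempotents P := ⟨⟨hPidem, fun i j hij => hPorth i j hij⟩, hPsum⟩
  have hE0 : 0 ≤ E := (nonneg_iff_isPositive E).mpr hE.1
  have htrace : (LinearMap.trace ℂ H ↑(E ∘L A)).re
      = (LinearMap.trace ℂ H ↑(∑ j ∈ univ.filter (fun j => 0 < lam j), (lam j : ℂ) • P j)).re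
      ↔ IsHelstromOptimal lam P E := by
    subst hspec
    exact re_trace_mul_eq_re_trace_posPart_iff (fun j => ⟨hPidem j, hPsa j⟩) hE0 hE.2
  refine ⟨htrace.trans (isHelstromOptimal_iff_le_and_le hP hPsa hE0 hE.2),
    htrace.trans (isHelstromOptimal_iff_eigenvectors hP hspec),
    fun hker h => (htrace.mp h).eq_sum_filter_pos hP.complete fun j hj => ?_⟩
  ext v
  refine hker _ ?_
  rw [apply_proj_eq_smul hP.toOrthogonalIdempotents hspec, hj, Complex.ofReal_zero, zero_smul]

/-- (Helstrom; Proposition 5, characterization of optimizers.) Let `A` be a self-adjoint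
operator on a finite-dimensional complex Hilbert space with spectral decomposition
`A = ∑ⱼ λⱼ Pⱼ`, and let `0 ≤ E ≤ I`. Then `tr(E·A)` equals its maximal value
`tr(A⁺)` if and only if `P₊(A) ≤ E ≤ P₊(A) + P₀(A)` (where `B ≤ C` means `C - B` is
positive semidefinite, `P₊(A)` projects onto the span of eigenvectors with positive
eigenvalues and `P₀(A)` onto the kernel); equivalently, if and only if `E v = v` for
every eigenvector `v` of `A` with positive eigenvalue and `E v = 0` for every
eigenvector with negative eigenvalue. In particular, if `0` is not an eigenvalue of
`A` then the optimizer `E = P₊(A)` is unique. -/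
theorem stmt_12
    {H : Type*} [NormedAddCommGroup H] [InnerProductSpace ℂ H] [FiniteDimensional ℂ H]
    (A : H →L[ℂ] H) (hA : IsSelfAdjoint A)
    (m : ℕ) (lam : Fin m → ℝ) (P : Fin m → H →L[ℂ] H)
    (hPsa : ∀ j, IsSelfAdjoint (P j))
    (hPidem : ∀ j, P j ∘L P j = P j)
    (hPorth : ∀ i j, i ≠ j → P i ∘L P j = 0)
    (hPsum : ∑ j, P j = 1)
    (hspec : A = ∑ j, (lam j : ℂ) • P j)
    (E : H →L[ℂ] H) (hE : E.IsPositive ∧ (1 - E).IsPositive) :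
    ((LinearMap.trace ℂ H ↑(E ∘L A)).re
        = (LinearMap.trace ℂ H
            ↑(∑ j ∈ univ.filter (fun j => 0 < lam j), (lam j : ℂ) • P j)).re
      ↔ (E - ∑ j ∈ univ.filter (fun j => 0 < lam j), P j).IsPositive
        ∧ ((∑ j ∈ univ.filter (fun j => 0 < lam j), P j)
            + (∑ j ∈ univ.filter (fun j => lam j = 0), P j) - E).IsPositive)
    ∧ ((LinearMap.trace ℂ H ↑(E ∘L A)).re
        = (LinearMap.trace ℂ H
            ↑(∑ j ∈ univ.filter (fun j => 0 < lam j), (lam j : ℂ) • P j)).re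
      ↔ (∀ (c : ℝ) (v : H), 0 < c → v ≠ 0 → A v = (c : ℂ) • v → E v = v)
        ∧ (∀ (c : ℝ) (v : H), c < 0 → v ≠ 0 → A v = (c : ℂ) • v → E v = 0))
    ∧ ((∀ v : H, A v = 0 → v = 0) →
        ((LinearMap.trace ℂ H ↑(E ∘L A)).re
          = (LinearMap.trace ℂ H
              ↑(∑ j ∈ univ.filter (fun j => 0 < lam j), (lam j : ℂ) • P j)).re
          → E = ∑ j ∈ univ.filter (fun j => 0 < lam j), P j)) :=
  stmt_12_general A m lam P hPsa hPidem hPorth hPsum hspec E hE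
end

section
/- Let ρ₁ and ρ₂ be density matrices on a finite-dimensional complex Hilbert space H and let p ∈ [0,1]. For every effect E (0 ≤ E ≤ I), the reliability for distinguishing ρ₁ (prior p) from ρ₂ (prior 1−p) satisfies R(ρ₁,ρ₂,E) = p·tr(E ρ₁) + (1−p)·tr((I−E) ρ₂) = 1 − p + tr(E·(p ρ₁ − (1−p) ρ₂)), and the maximum of R(ρ₁,ρ₂,E) over all effects E equals 1 − p + tr( (p ρ₁ − (1−p) ρ₂)⁺ ), i.e., 1 − p plus the sum of the positive eigenvalues of p ρ₁ − (1−p) ρ₂. -/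
/-!
Since `tr ρ₂ = 1`, the reliability is `1 - p + Re tr(E A)` with `A = p ρ₁ - (1 - p) ρ₂`, so only
`Re tr(E A) = ∑ⱼ λⱼ Re tr(E Pⱼ)` has to be maximised. For an effect `E` and an orthogonal
projection `Q` one has `0 ≤ Re tr(E Q) ≤ tr Q`, as `tr(E Q) = tr(Q E Q)` and `Q E Q`, `Q (1 - E) Q`
are positive; hence each term is at most `λⱼ tr Pⱼ` when `λⱼ > 0` and at most `0` otherwise. The
projection `∑_{λⱼ > 0} Pⱼ` onto the positive spectral subspace attains this bound.
-/

open Finset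

namespace ContinuousLinearMap

section Trace

variable {H : Type*} [NormedAddCommGroup H] [NormedSpace ℂ H]

lemma trace_comp_comm [FiniteDimensional ℂ H] (f g : H →L[ℂ] H) :
    LinearMap.trace ℂ H ↑(f ∘L g) = LinearMap.trace ℂ H ↑(g ∘L f) := by
  rw [toLinearMap_comp, toLinearMap_comp, LinearMap.trace_comp_comm']

theorem reliability_eq (E ρ₁ ρ₂ : H →L[ℂ] H) (hρ₂tr : LinearMap.trace ℂ H ↑ρ₂ = 1) (p : ℝ) :
    p * (LinearMap.trace ℂ H ↑(E ∘L ρ₁)).re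
        + (1 - p) * (LinearMap.trace ℂ H ↑((1 - E) ∘L ρ₂)).re
      = 1 - p + (LinearMap.trace ℂ H
          ↑(E ∘L ((p : ℂ) • ρ₁ - ((1 - p : ℝ) : ℂ) • ρ₂))).re := by
  have h_compl : LinearMap.trace ℂ H ↑((1 - E) ∘L ρ₂) = 1 - LinearMap.trace ℂ H ↑(E ∘L ρ₂) := by
    rw [sub_comp, one_def, id_comp, toLinearMap_sub, map_sub, hρ₂tr]
  rw [h_compl, comp_sub, comp_smul, comp_smul]
  simp only [toLinearMap_sub, toLinearMap_smul, map_sub, map_smul, smul_eq_mul, Complex.sub_re,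
    Complex.one_re, Complex.re_ofReal_mul]
  ring

end Trace

variable {H : Type*} [NormedAddCommGroup H] [InnerProductSpace ℂ H]

lemma IsPositive.re_trace_nonneg {T : H →L[ℂ] H} (hT : T.IsPositive) :
    0 ≤ (LinearMap.trace ℂ H ↑T).re :=
  (Complex.nonneg_iff.mp hT.toLinearMap.trace_nonneg).1

variable {ι : Type*} [Fintype ι] {P : ι → H →L[ℂ] H}

theorem sum_comp_sum_smul (hPidem : ∀ j, P j ∘L P j = P j)
    (hPorth : ∀ i j, i ≠ j → P i ∘L P j = 0) (S : Finset ι) (c : ι → ℂ) :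
    (∑ i ∈ S, P i) ∘L (∑ j, c j • P j) = ∑ j ∈ S, c j • P j := by
  classical
  have h_prod : ∀ i j, P i ∘L P j = if i = j then P j else 0 := fun i j => by
    split_ifs with h
    · exact h ▸ hPidem i
    · exact hPorth i j h
  simp only [comp_finsetSum, comp_smul, finsetSum_comp, h_prod, sum_ite_eq', smul_ite, smul_zero]
  rw [sum_ite_mem, univ_inter]

theorem isPositive_one_sub_sum (hP : ∀ j, (P j).IsPositive) (hPsum : ∑ j, P j = 1)
    (p : ι → Prop) [DecidablePred p] : (1 - ∑ j ∈ univ.filter p, P j).IsPositive := by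
  rw [← hPsum, ← sum_filter_add_sum_filter_not univ p P, add_sub_cancel_left]
  exact isPositive_sum _ fun j _ => hP j

variable [FiniteDimensional ℂ H]

lemma IsPositive.re_trace_comp_nonneg {E Q : H →L[ℂ] H} (hE : E.IsPositive)
    (hQ : IsStarProjection Q) : 0 ≤ (LinearMap.trace ℂ H ↑(E ∘L Q)).re := by
  have h_conj : LinearMap.trace ℂ H ↑(E ∘L Q) = LinearMap.trace ℂ H ↑(Q ∘L E ∘L adjoint Q) := by
    rw [← star_eq_adjoint, hQ.isSelfAdjoint.star_eq, trace_comp_comm Q, comp_assoc, ← mul_def Q Q,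
      hQ.isIdempotentElem.eq]
  rw [h_conj]
  exact (hE.conj_adjoint Q).re_trace_nonneg

lemma re_trace_comp_le_of_isPositive_one_sub {E Q : H →L[ℂ] H} (hE : (1 - E).IsPositive)
    (hQ : IsStarProjection Q) :
    (LinearMap.trace ℂ H ↑(E ∘L Q)).re ≤ (LinearMap.trace ℂ H ↑Q).re := by
  have h := hE.re_trace_comp_nonneg hQ
  rw [sub_comp, one_def, id_comp, toLinearMap_sub, map_sub, Complex.sub_re] at h
  linarith

theorem re_trace_comp_sum_smul_le (hP : ∀ j, IsStarProjection (P j)) {E : H →L[ℂ] H}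
    (hE : E.IsPositive) (hE' : (1 - E).IsPositive) (lam : ι → ℝ) :
    (LinearMap.trace ℂ H ↑(E ∘L ∑ j, (lam j : ℂ) • P j)).re
      ≤ (LinearMap.trace ℂ H ↑(∑ j ∈ univ.filter (fun j => 0 < lam j), (lam j : ℂ) • P j)).re := by
  simp only [comp_finsetSum, comp_smul, toLinearMap_sum, toLinearMap_smul, map_sum, map_smul,
    smul_eq_mul, Complex.re_sum, Complex.re_ofReal_mul]
  rw [sum_filter]
  refine sum_le_sum fun j _ => ?_
  split_ifs with hj
  · exact mul_le_mul_of_nonneg_left (re_trace_comp_le_of_isPositive_one_sub hE' (hP j)) hj.le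
  · exact mul_nonpos_of_nonpos_of_nonneg (not_lt.mp hj) (hE.re_trace_comp_nonneg (hP j))

end ContinuousLinearMap

open ContinuousLinearMap in
theorem stmt_13_general
    {H : Type*} [NormedAddCommGroup H] [InnerProductSpace ℂ H] [FiniteDimensional ℂ H]
    (ρ₁ ρ₂ : H →L[ℂ] H)
    (hρ₂tr : LinearMap.trace ℂ H ↑ρ₂ = 1)
    (p : ℝ)
    (m : ℕ) (lam : Fin m → ℝ) (P : Fin m → H →L[ℂ] H)
    (hPsa : ∀ j, IsSelfAdjoint (P j))
    (hPidem : ∀ j, P j ∘L P j = P j)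
    (hPorth : ∀ i j, i ≠ j → P i ∘L P j = 0)
    (hPsum : ∑ j, P j = 1)
    (hspec : (p : ℂ) • ρ₁ - ((1 - p : ℝ) : ℂ) • ρ₂ = ∑ j, (lam j : ℂ) • P j) :
    (∀ E : H →L[ℂ] H, E.IsPositive → (1 - E).IsPositive →
      p * (LinearMap.trace ℂ H ↑(E ∘L ρ₁)).re
        + (1 - p) * (LinearMap.trace ℂ H ↑((1 - E) ∘L ρ₂)).re
      = 1 - p + (LinearMap.trace ℂ H
          ↑(E ∘L ((p : ℂ) • ρ₁ - ((1 - p : ℝ) : ℂ) • ρ₂))).re)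
    ∧ IsGreatest
        {x : ℝ | ∃ E : H →L[ℂ] H, (E.IsPositive ∧ (1 - E).IsPositive) ∧
          x = p * (LinearMap.trace ℂ H ↑(E ∘L ρ₁)).re
            + (1 - p) * (LinearMap.trace ℂ H ↑((1 - E) ∘L ρ₂)).re}
        (1 - p + (LinearMap.trace ℂ H
          ↑(∑ j ∈ univ.filter (fun j => 0 < lam j), (lam j : ℂ) • P j)).re) := by
  have hP : ∀ j, IsStarProjection (P j) := fun j => ⟨hPidem j, hPsa j⟩
  have hPpos : ∀ j, (P j).IsPositive := fun j => IsPositive.of_isStarProjection (hP j)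
  set E₀ := ∑ j ∈ univ.filter (fun j => 0 < lam j), P j
  have hE₀ : E₀.IsPositive := isPositive_sum _ fun j _ => hPpos j
  refine ⟨fun E _ _ => reliability_eq E ρ₁ ρ₂ hρ₂tr p,
    ⟨E₀, ⟨hE₀, isPositive_one_sub_sum hPpos hPsum _⟩, ?_⟩, ?_⟩
  · rw [reliability_eq E₀ ρ₁ ρ₂ hρ₂tr p, hspec, sum_comp_sum_smul hPidem hPorth]
  · rintro x ⟨E, ⟨hE, hE'⟩, rfl⟩
    rw [reliability_eq E ρ₁ ρ₂ hρ₂tr p, hspec]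
    gcongr 1 - p + ?_
    exact re_trace_comp_sum_smul_le hP hE hE' lam

/-- Let `ρ₁, ρ₂` be density matrices on a finite-dimensional complex Hilbert space and
`p ∈ [0,1]`. For every effect `E` (`0 ≤ E ≤ I`), the reliability for distinguishing
`ρ₁` (prior `p`) from `ρ₂` (prior `1-p`) satisfies
`R(ρ₁,ρ₂,E) = p·tr(E ρ₁) + (1-p)·tr((I-E) ρ₂) = 1 - p + tr(E·(p ρ₁ - (1-p) ρ₂))`,
and the maximum of `R(ρ₁,ρ₂,E)` over all effects `E` equals `1 - p` plus the sum of
the positive eigenvalues of `A = p ρ₁ - (1-p) ρ₂`, i.e. `1 - p + tr(A⁺)` (here `A` is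
given by its spectral decomposition `A = ∑ⱼ λⱼ Pⱼ`). -/
theorem stmt_13
    {H : Type*} [NormedAddCommGroup H] [InnerProductSpace ℂ H] [FiniteDimensional ℂ H]
    (ρ₁ ρ₂ : H →L[ℂ] H)
    (hρ₁ : ρ₁.IsPositive) (hρ₁tr : LinearMap.trace ℂ H ↑ρ₁ = 1)
    (hρ₂ : ρ₂.IsPositive) (hρ₂tr : LinearMap.trace ℂ H ↑ρ₂ = 1)
    (p : ℝ) (hp : p ∈ Set.Icc (0 : ℝ) 1)
    (m : ℕ) (lam : Fin m → ℝ) (P : Fin m → H →L[ℂ] H)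
    (hPsa : ∀ j, IsSelfAdjoint (P j))
    (hPidem : ∀ j, P j ∘L P j = P j)
    (hPorth : ∀ i j, i ≠ j → P i ∘L P j = 0)
    (hPsum : ∑ j, P j = 1)
    (hspec : (p : ℂ) • ρ₁ - ((1 - p : ℝ) : ℂ) • ρ₂ = ∑ j, (lam j : ℂ) • P j) :
    (∀ E : H →L[ℂ] H, E.IsPositive → (1 - E).IsPositive →
      p * (LinearMap.trace ℂ H ↑(E ∘L ρ₁)).re
        + (1 - p) * (LinearMap.trace ℂ H ↑((1 - E) ∘L ρ₂)).re
      = 1 - p + (LinearMap.trace ℂ H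
          ↑(E ∘L ((p : ℂ) • ρ₁ - ((1 - p : ℝ) : ℂ) • ρ₂))).re)
    ∧ IsGreatest
        {x : ℝ | ∃ E : H →L[ℂ] H, (E.IsPositive ∧ (1 - E).IsPositive) ∧
          x = p * (LinearMap.trace ℂ H ↑(E ∘L ρ₁)).re
            + (1 - p) * (LinearMap.trace ℂ H ↑((1 - E) ∘L ρ₂)).re}
        (1 - p + (LinearMap.trace ℂ H
          ↑(∑ j ∈ univ.filter (fun j => 0 < lam j), (lam j : ℂ) • P j)).re) :=
  stmt_13_general ρ₁ ρ₂ hρ₂tr p m lam P hPsa hPidem hPorth hPsum hspec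
end
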